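/- The linearization of a path-transformation at the origin of the path is parallel transport (Theorem 3.1, second identity): Let (ω,Γ) be a symplectic form with a symplectic connection on ℝ^{2n}, and let (ℋ,s) be an Ether structure for (ω,Γ). Let y : [0,1] → ℝ^{2n} be a smooth path and, for p near y(0), let Y^t(p) be the solution of dY^i/dt = (1/2) Σ_{j,m} (dy^j/dt)(t) · ∂_{w^m}ℋ_{y(t)}(w)_j|_{w=Y(t)} · Ψ^{mi}(Y(t)) with Y(0) = p, assumed to exist for t ∈ [0,1]. Then the Jacobian V(t) = (∂Y^t(p)^i/∂p^k)|_{p=y(0)} satisfies the parallel transport equation dV^i_k/dt = −Σ_{j,m} (dy^j/dt)(t) Γ^i_{mj}(y(t)) V^m_k with V(0) = I; that is, the differential of Y^t at y(0) equals the Γ-parallel transport along y|_{[0,t]}. -/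

import Mathlib

open scoped BigOperators
noncomputable section

/-- Points of coordinate space `ℝ^N`. -/
abbrev Pt (N : ℕ) := Fin N → ℝ

/-- Partial derivative `∂f/∂x^i` of a scalar function on `ℝ^N`. -/
noncomputable def pd {N : ℕ} (i : Fin N) (f : Pt N → ℝ) (x : Pt N) : ℝ :=
  fderiv ℝ f x (Pi.single i 1)

/-- The Poisson tensor `Ψ = ω⁻¹`. -/
noncomputable def Psi {N : ℕ} (ω : Pt N → Matrix (Fin N) (Fin N) ℝ) (z : Pt N) :
    Matrix (Fin N) (Fin N) ℝ := (ω z)⁻¹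

/-- The Poisson bracket `{f,g}(z) = Σ ∂_m f Ψ^{mi} ∂_i g`. -/
noncomputable def pb {N : ℕ} (ω : Pt N → Matrix (Fin N) (Fin N) ℝ) (f g : Pt N → ℝ)
    (z : Pt N) : ℝ := ∑ m, ∑ i, pd m f z * Psi ω z m i * pd i g z

/-- A symplectic form on `ℝ^N` in coordinates: a smooth, pointwise antisymmetric and
invertible matrix-valued map satisfying the closedness condition. -/
structure SymplForm (N : ℕ) where
  ω : Pt N → Matrix (Fin N) (Fin N) ℝ
  smooth : ∀ i j, ContDiff ℝ (⊤ : ℕ∞) fun z => ω z i j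
  antisymm : ∀ z i j, ω z i j = - ω z j i
  invertible : ∀ z, IsUnit (ω z).det
  closed : ∀ z i j k,
    pd i (fun w => ω w j k) z + pd j (fun w => ω w k i) z + pd k (fun w => ω w i j) z = 0

/-- A symplectic connection for `S`: smooth Christoffel symbols `Γ x j k l = Γ^j_{kl}(x)`,
symmetric in the lower indices, with `ω` covariantly constant. -/
structure SymplConn (N : ℕ) (S : SymplForm N) where
  Γ : Pt N → Fin N → Fin N → Fin N → ℝ
  smooth : ∀ j k l, ContDiff ℝ (⊤ : ℕ∞) fun z => Γ z j k l
  symm : ∀ z j k l, Γ z j k l = Γ z j l k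
  compat : ∀ z i j k,
    pd k (fun w => S.ω w i j) z - (∑ l, Γ z l i k * S.ω z l j)
      - (∑ l, Γ z l j k * S.ω z i l) = 0

/-- An Ether structure for `(ω, Γ)`: the Ether Hamiltonian `ℋ` (a 1-form in `x` with
values in functions of `z`) and the reflections `s`, satisfying the zero-curvature
equation, the boundary conditions on the diagonal, the reflection (Ether Hamiltonian
system) equation, and the skew-symmetry condition. -/
structure EtherStructure (N : ℕ) (S : SymplForm N) (C : SymplConn N S) where
  H : Pt N → Pt N → Fin N → ℝ
  s : Pt N → Pt N → Pt N
  smoothH : ∀ k, ContDiff ℝ (⊤ : ℕ∞) fun p : Pt N × Pt N => H p.1 p.2 k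
  smoothS : ∀ i, ContDiff ℝ (⊤ : ℕ∞) fun p : Pt N × Pt N => s p.1 p.2 i
  zeroCurv : ∀ x z j k,
    pd j (fun w => H w z k) x - pd k (fun w => H w z j) x
      + pb S.ω (fun w => H x w j) (fun w => H x w k) z = 0
  bc0 : ∀ x k, H x x k = 0
  bc1 : ∀ x k m, pd m (fun w => H x w k) x = 2 * S.ω x k m
  bc2 : ∀ x k l m,
    pd l (fun w => pd m (fun w' => H x w' k) w) x
      = ∑ r, C.Γ x r l m * pd r (fun w => H x w k) x
  reflEq : ∀ x z j i,
    pd j (fun w => s w z i) x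
      = ∑ m, pd m (fun w => H x w j) (s x z) * Psi S.ω (s x z) m i
  reflInit : ∀ z, s z z = z
  skew : ∀ x z k, H x (s x z) k = - H x z k

-- basic pd lemmas
theorem pd_coord {N : ℕ} (i k : Fin N) (x : Pt N) :
    pd k (fun p => p i) x = if i = k then (1:ℝ) else 0 := by
  have : (fun p : Pt N => p i) = (ContinuousLinearMap.proj i : Pt N →L[ℝ] ℝ) := rfl
  rw [pd, this, ContinuousLinearMap.fderiv]
  simp [Pi.single_apply]

theorem fderiv_apply_eq_sum {N : ℕ} {f : Pt N → ℝ} {x : Pt N}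
    (hf : DifferentiableAt ℝ f x) (v : Pt N) :
    fderiv ℝ f x v = ∑ l, v l * pd l f x := by
  have hv : v = ∑ l, v l • (Pi.single l 1 : Pt N) := by
    funext j
    simp [Pi.single_apply]
  conv_lhs => rw [hv]
  rw [map_sum]
  exact Finset.sum_congr rfl fun l _ => by rw [map_smul]; rfl

theorem pd_sum {N : ℕ} {ι : Type*} (s : Finset ι) {f : ι → Pt N → ℝ} {x : Pt N} (i : Fin N)
    (h : ∀ a ∈ s, DifferentiableAt ℝ (f a) x) :
    pd i (fun z => ∑ a ∈ s, f a z) x = ∑ a ∈ s, pd i (f a) x := by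
  unfold pd
  rw [fderiv_fun_sum h]
  simp

theorem pd_mul {N : ℕ} {f g : Pt N → ℝ} {x : Pt N} (i : Fin N)
    (hf : DifferentiableAt ℝ f x) (hg : DifferentiableAt ℝ g x) :
    pd i (fun z => f z * g z) x = pd i f x * g x + f x * pd i g x := by
  unfold pd
  rw [fderiv_fun_mul hf hg]
  simp only [ContinuousLinearMap.add_apply, ContinuousLinearMap.smul_apply, smul_eq_mul]
  ring

theorem pd_const_mul {N : ℕ} {f : Pt N → ℝ} {x : Pt N} (i : Fin N) (c : ℝ)
    (hf : DifferentiableAt ℝ f x) :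
    pd i (fun z => c * f z) x = c * pd i f x := by
  unfold pd
  rw [fderiv_const_mul hf c]
  simp

theorem pd_const {N : ℕ} {x : Pt N} (i : Fin N) (c : ℝ) :
    pd i (fun _ => c) x = 0 := by
  unfold pd
  rw [fderiv_fun_const]
  simp

/-- chain rule in coordinates -/
theorem pd_comp {N M : ℕ} {f : Pt N → ℝ} {G : Pt M → Pt N} {x : Pt M} (k : Fin M)
    (hf : DifferentiableAt ℝ f (G x)) (hG : DifferentiableAt ℝ G x) :
    pd k (fun p => f (G p)) x = ∑ l, pd l f (G x) * pd k (fun p => G p l) x := by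
  have h1 : pd k (fun p => f (G p)) x = fderiv ℝ f (G x) (fderiv ℝ G x (Pi.single k 1)) := by
    unfold pd
    rw [show (fun p => f (G p)) = f ∘ G from rfl, fderiv_comp x hf hG]
    rfl
  rw [h1, fderiv_apply_eq_sum hf]
  refine Finset.sum_congr rfl fun l _ => ?_
  rw [mul_comm]
  congr 1
  have : HasFDerivAt G (fderiv ℝ G x) x := hG.hasFDerivAt
  rw [hasFDerivAt_pi'] at this
  unfold pd
  rw [(this l).fderiv]
  rfl

section Slot
variable {E : Type*} [NormedAddCommGroup E] [NormedSpace ℝ E]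

/-- partial derivative in the second slot of a function on a product -/
theorem pd_snd {B : ℕ} {F : E × Pt B → ℝ} {x : E} {z : Pt B} (m : Fin B)
    (hF : DifferentiableAt ℝ F (x, z)) :
    pd m (fun w => F (x, w)) z = fderiv ℝ F (x, z) (0, Pi.single m 1) := by
  have hg : HasFDerivAt (fun w : Pt B => (x, w)) (ContinuousLinearMap.inr ℝ E (Pt B)) z :=
    (hasFDerivAt_const x z).prodMk (hasFDerivAt_id z)
  have := (hF.hasFDerivAt.comp z hg).fderiv
  unfold pd
  rw [show (fun w => F (x, w)) = F ∘ (fun w : Pt B => (x, w)) from rfl, this]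
  rfl

/-- derivative in the first (real) slot of a function on a product -/
theorem deriv_fst {B : ℕ} {F : ℝ × Pt B → ℝ} {t : ℝ} {p : Pt B}
    (hF : DifferentiableAt ℝ F (t, p)) :
    HasDerivAt (fun τ => F (τ, p)) (fderiv ℝ F (t, p) (1, 0)) t := by
  have hg : HasDerivAt (fun τ : ℝ => (τ, p)) ((1:ℝ), (0 : Pt B)) t := by
    exact (hasDerivAt_id t).prodMk (hasDerivAt_const t p)
  exact (hF.hasFDerivAt.comp_hasDerivAt t hg)

theorem contDiff_fderiv_apply {B : ℕ} {F : E × Pt B → ℝ} (hF : ContDiff ℝ (⊤ : ℕ∞) F)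
    (v : E × Pt B) : ContDiff ℝ (⊤ : ℕ∞) (fun q => fderiv ℝ F q v) :=
  (hF.fderiv_right (le_refl _)).clm_apply contDiff_const
end Slot

theorem contDiff_det {N M : ℕ} {A : Pt M → Matrix (Fin N) (Fin N) ℝ}
    (h : ∀ i j, ContDiff ℝ (⊤ : ℕ∞) fun z => A z i j) : ContDiff ℝ (⊤ : ℕ∞) fun z => (A z).det := by
  simp only [Matrix.det_apply]
  apply ContDiff.sum
  intro σ _
  have : (fun z => Equiv.Perm.sign σ • ∏ i, A z (σ i) i)
      = fun z => ((Equiv.Perm.sign σ : ℤ) : ℝ) * ∏ i, A z (σ i) i := by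
    funext z
    simp [Units.smul_def, zsmul_eq_mul]
  rw [this]
  exact contDiff_const.mul (contDiff_prod fun i _ => h (σ i) i)

theorem contDiff_Psi {N : ℕ} {ω : Pt N → Matrix (Fin N) (Fin N) ℝ}
    (hs : ∀ i j, ContDiff ℝ (⊤ : ℕ∞) fun z => ω z i j) (hu : ∀ z, IsUnit (ω z).det)
    (m i : Fin N) : ContDiff ℝ (⊤ : ℕ∞) fun z => Psi ω z m i := by
  have hinv : ∀ z, Psi ω z m i = ((ω z).det)⁻¹ * (ω z).adjugate m i := by
    intro z
    rw [Psi, Matrix.inv_def, Ring.inverse_eq_inv']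
    rfl
  have hadj : ContDiff ℝ (⊤ : ℕ∞) fun z => (ω z).adjugate m i := by
    have : ∀ z, (ω z).adjugate m i = ((ω z).updateRow i (Pi.single m 1)).det := fun z =>
      Matrix.adjugate_apply _ _ _
    simp only [this]
    apply contDiff_det
    intro a b
    by_cases hab : a = i
    · simp only [Matrix.updateRow_apply, hab, if_true]
      exact contDiff_const
    · simp only [Matrix.updateRow_apply, hab, if_false]
      exact hs a b
  have hdet : ContDiff ℝ (⊤ : ℕ∞) fun z => (ω z).det := contDiff_det hs
  simp only [hinv]
  rw [contDiff_iff_contDiffAt]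
  intro z
  exact (hdet.contDiffAt.inv (isUnit_iff_ne_zero.mp (hu z))).mul hadj.contDiffAt

theorem pd_Psi {N : ℕ} {ω : Pt N → Matrix (Fin N) (Fin N) ℝ}
    (hs : ∀ i j, ContDiff ℝ (⊤ : ℕ∞) fun z => ω z i j) (hu : ∀ z, IsUnit (ω z).det)
    (l m i : Fin N) (x : Pt N) :
    pd l (fun z => Psi ω z m i) x
      = -∑ a, ∑ b, Psi ω x m a * pd l (fun z => ω z a b) x * Psi ω x b i := by
  have hPsiDiff : ∀ c j, DifferentiableAt ℝ (fun z => Psi ω z c j) x := fun c j =>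
    ((contDiff_Psi hs hu c j).differentiable (by simp)).differentiableAt
  have hωDiff : ∀ a b, DifferentiableAt ℝ (fun z => ω z a b) x := fun a b =>
    ((hs a b).differentiable (by simp)).differentiableAt
  -- the differentiated identity
  have key : ∀ a : Fin N,
      ∑ c, (pd l (fun z => ω z a c) x * Psi ω x c i + ω x a c * pd l (fun z => Psi ω z c i) x)
        = 0 := by
    intro a
    have hconst : (fun z => ∑ c, ω z a c * Psi ω z c i) = fun _ => (1 : Matrix (Fin N) (Fin N) ℝ) a i := by
      funext z
      rw [← Matrix.mul_apply, Psi, Matrix.mul_nonsing_inv _ (hu z)]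
    have h0 : pd l (fun z => ∑ c, ω z a c * Psi ω z c i) x = 0 := by
      rw [hconst]; exact pd_const l _
    rw [pd_sum Finset.univ l (fun c _ => (hωDiff a c).fun_mul (hPsiDiff c i))] at h0
    rw [← h0]
    exact Finset.sum_congr rfl fun c _ => (pd_mul l (hωDiff a c) (hPsiDiff c i)).symm
  -- multiply by Psi and contract
  have hPsiω : ∀ c : Fin N, ∑ a, Psi ω x m a * ω x a c = if m = c then 1 else 0 := by
    intro c
    rw [← Matrix.mul_apply, Psi, Matrix.nonsing_inv_mul _ (hu x), Matrix.one_apply]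
  have expand : ∑ a, Psi ω x m a *
      (∑ c, (pd l (fun z => ω z a c) x * Psi ω x c i + ω x a c * pd l (fun z => Psi ω z c i) x))
      = 0 := by
    simp only [key, mul_zero, Finset.sum_const_zero]
  have lhs_eq : ∑ a, Psi ω x m a *
      (∑ c, (pd l (fun z => ω z a c) x * Psi ω x c i + ω x a c * pd l (fun z => Psi ω z c i) x))
      = (∑ a, ∑ b, Psi ω x m a * pd l (fun z => ω z a b) x * Psi ω x b i)
        + pd l (fun z => Psi ω z m i) x := by
    simp only [Finset.mul_sum, mul_add, Finset.sum_add_distrib]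
    congr 1
    · exact Finset.sum_congr rfl fun a _ => Finset.sum_congr rfl fun b _ => by ring
    · rw [Finset.sum_comm]
      have : ∀ c : Fin N, ∑ a, Psi ω x m a * (ω x a c * pd l (fun z => Psi ω z c i) x)
          = (if m = c then 1 else 0) * pd l (fun z => Psi ω z c i) x := by
        intro c
        rw [← hPsiω c, Finset.sum_mul]
        exact Finset.sum_congr rfl fun a _ => by ring
      simp only [this, ite_mul, one_mul, zero_mul]
      simp
  rw [lhs_eq] at expand
  linarith

section Main
variable {n : ℕ} (S : SymplForm (2*n)) (C : SymplConn (2*n) S) (E : EtherStructure (2*n) S C)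

/-- joint smoothness of the z-partial of H -/
theorem hpdH (m j : Fin (2*n)) :
    ContDiff ℝ (⊤ : ℕ∞) fun q : Pt (2*n) × Pt (2*n) => pd m (fun w => E.H q.1 w j) q.2 := by
  have heq : (fun q : Pt (2*n) × Pt (2*n) => pd m (fun w => E.H q.1 w j) q.2)
      = fun q => fderiv ℝ (fun p : Pt (2*n) × Pt (2*n) => E.H p.1 p.2 j) q (0, Pi.single m 1) := by
    funext q
    have := pd_snd (F := fun p : Pt (2*n) × Pt (2*n) => E.H p.1 p.2 j) (x := q.1) (z := q.2) m
      (((E.smoothH j).differentiable (by simp)).differentiableAt)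
    simpa using this
  rw [heq]
  exact contDiff_fderiv_apply (E.smoothH j) _

/-- the non-autonomous vector field of the path transformation -/
noncomputable def Gv (y : ℝ → Pt (2*n)) (t : ℝ) (z : Pt (2*n)) : Pt (2*n) := fun i =>
  (1/2) * ∑ j, ∑ m, deriv (fun τ => y τ j) t
    * pd m (fun w => E.H (y t) w j) z * Psi S.ω z m i

theorem Gv_smooth (y : ℝ → Pt (2*n)) (hy : ContDiff ℝ (⊤ : ℕ∞) y) (i : Fin (2*n)) :
    ContDiff ℝ (⊤:ℕ∞) fun q : ℝ × Pt (2*n) => Gv S C E y q.1 q.2 i := by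
  apply ContDiff.mul contDiff_const
  apply ContDiff.sum; intro j _
  apply ContDiff.sum; intro m _
  have h1 : ContDiff ℝ (⊤:ℕ∞) fun q : ℝ × Pt (2*n) => deriv (fun τ => y τ j) q.1 :=
    ((contDiff_infty_iff_deriv.mp ((contDiff_pi.mp hy j).of_le (by simp))).2).comp contDiff_fst
  have h2 : ContDiff ℝ (⊤:ℕ∞) fun q : ℝ × Pt (2*n) => pd m (fun w => E.H (y q.1) w j) q.2 :=
    ((hpdH S C E m j).of_le le_rfl).comp
      (((hy.of_le (by simp)).comp contDiff_fst).prodMk contDiff_snd)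
  have h3 : ContDiff ℝ (⊤:ℕ∞) fun q : ℝ × Pt (2*n) => Psi S.ω q.2 m i :=
    ((contDiff_Psi S.smooth S.invertible m i).of_le (by simp)).comp contDiff_snd
  exact (h1.mul h2).mul h3

/-- on the diagonal, the vector field reproduces the velocity of the path -/
theorem Gv_diag (y : ℝ → Pt (2*n)) (t : ℝ) (i : Fin (2*n)) :
    Gv S C E y t (y t) i = deriv (fun τ => y τ i) t := by
  have key : ∀ j, ∑ m, S.ω (y t) j m * Psi S.ω (y t) m i = if j = i then 1 else 0 := by
    intro j
    rw [← Matrix.mul_apply, Psi, Matrix.mul_nonsing_inv _ (S.invertible (y t)), Matrix.one_apply]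
  have step : ∀ j, ∑ m, deriv (fun τ => y τ j) t * (2 * S.ω (y t) j m) * Psi S.ω (y t) m i
      = 2 * deriv (fun τ => y τ j) t * (if j = i then 1 else 0) := by
    intro j
    rw [← key j, Finset.mul_sum]
    exact Finset.sum_congr rfl fun m _ => by ring
  unfold Gv
  simp only [E.bc1, step, mul_ite, mul_one, mul_zero]
  rw [Finset.sum_ite_eq' Finset.univ i (fun j => 2 * deriv (fun τ => y τ j) t)]
  simp only [Finset.mem_univ, if_true]
  ring

theorem traj (y : ℝ → Pt (2*n)) (hy : ContDiff ℝ (⊤ : ℕ∞) y)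
    (Y : ℝ → Pt (2*n) → Pt (2*n))
    (hYsmooth : ∀ i, ContDiff ℝ (⊤ : ℕ∞) fun q : ℝ × Pt (2*n) => Y q.1 q.2 i)
    (hY0 : ∀ p, Y 0 p = p)
    (hYode : ∀ t ∈ Set.Icc (0:ℝ) 1, ∀ p i,
      HasDerivAt (fun τ => Y τ p i)
        ((1/2) * ∑ j, ∑ m, deriv (fun τ => y τ j) t
          * pd m (fun w => E.H (y t) w j) (Y t p) * Psi S.ω (Y t p) m i) t) :
    ∀ t ∈ Set.Icc (0:ℝ) 1, Y t (y 0) = y t := by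
  classical
  set f : ℝ → Pt (2*n) := fun t => Y t (y 0) with hf
  have hfc : Continuous f :=
    continuous_pi fun i => ((hYsmooth i).continuous).comp (continuous_id.prodMk continuous_const)
  have hyc : Continuous y := hy.continuous
  -- a closed ball containing both trajectories on [0,1]
  obtain ⟨R, hR⟩ : ∃ R, (f '' Set.Icc 0 1 ∪ y '' Set.Icc 0 1) ⊆ Metric.closedBall 0 R := by
    have hcomp : IsCompact (f '' Set.Icc 0 1 ∪ y '' Set.Icc 0 1) :=
      ((isCompact_Icc.image hfc)).union (isCompact_Icc.image hyc)
    obtain ⟨R, hR⟩ := hcomp.isBounded.subset_closedBall 0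
    exact ⟨R, hR⟩
  -- uniform Lipschitz constant on [0,1] × ball
  set Gp : ℝ × Pt (2*n) → Pt (2*n) := fun q => Gv S C E y q.1 q.2 with hGp
  have hGps : ContDiff ℝ (⊤:ℕ∞) Gp := by
    rw [hGp, contDiff_pi]
    exact fun i => Gv_smooth S C E y hy i
  set s : Set (ℝ × Pt (2*n)) := Set.Icc (0:ℝ) 1 ×ˢ Metric.closedBall 0 R with hs
  have hscomp : IsCompact s := isCompact_Icc.prod (isCompact_closedBall _ _)
  have hsconv : Convex ℝ s := (convex_Icc _ _).prod (convex_closedBall _ _)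
  obtain ⟨Cb, hCb⟩ : ∃ Cb, ∀ q ∈ s, ‖fderiv ℝ Gp q‖ ≤ Cb :=
    hscomp.exists_bound_of_continuousOn (hGps.continuous_fderiv (by simp)).continuousOn
  set K : NNReal := Real.toNNReal Cb with hK
  have hLip : LipschitzOnWith K Gp s := by
    apply Convex.lipschitzOnWith_of_nnnorm_fderiv_le
      (fun q _ => (hGps.differentiable (by simp)).differentiableAt)
      (fun q hq => ?_) hsconv
    have h1 : ‖fderiv ℝ Gp q‖ ≤ (K : ℝ) := le_trans (hCb q hq) (Real.le_coe_toNNReal Cb)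
    exact h1
  -- the clamped vector field
  set c : ℝ → ℝ := fun t => max 0 (min t 1) with hc
  have hcmem : ∀ t, c t ∈ Set.Icc (0:ℝ) 1 :=
    fun t => ⟨le_max_left _ _, max_le (by norm_num) (min_le_right _ _)⟩
  set v : ℝ → Pt (2*n) → Pt (2*n) := fun t z => Gp (c t, z) with hv
  have hvLip : ∀ t, LipschitzOnWith K (v t) (Metric.closedBall 0 R) := by
    intro t z hz z' hz'
    have h1 := hLip (x := (c t, z)) ⟨hcmem t, hz⟩ (y := (c t, z')) ⟨hcmem t, hz'⟩
    have h2 : edist ((c t, z) : ℝ × Pt (2*n)) (c t, z') = edist z z' := by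
      rw [Prod.edist_eq]
      simp
    rw [h2] at h1
    exact h1
  have hceq : ∀ t ∈ Set.Ico (0:ℝ) 1, c t = t := by
    intro t ht
    rw [hc]
    simp only
    rw [min_eq_left (le_of_lt ht.2), max_eq_right ht.1]
  -- derivative facts
  have hfderiv : ∀ t ∈ Set.Ico (0:ℝ) 1, HasDerivWithinAt f (v t (f t)) (Set.Ici t) t := by
    intro t ht
    have h1 : HasDerivAt f (Gv S C E y t (f t)) t := by
      rw [hasDerivAt_pi]
      intro i
      exact hYode t (Set.Ico_subset_Icc_self ht) (y 0) i
    have h2 : v t (f t) = Gv S C E y t (f t) := by rw [hv]; simp only; rw [hceq t ht]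
    rw [h2]
    exact h1.hasDerivWithinAt
  have hyderiv : ∀ t ∈ Set.Ico (0:ℝ) 1, HasDerivWithinAt y (v t (y t)) (Set.Ici t) t := by
    intro t ht
    have h1 : HasDerivAt y (Gv S C E y t (y t)) t := by
      rw [hasDerivAt_pi]
      intro i
      rw [Gv_diag S C E y t i]
      exact ((contDiff_pi.mp hy i).differentiable (by simp)).differentiableAt.hasDerivAt
    have h2 : v t (y t) = Gv S C E y t (y t) := by rw [hv]; simp only; rw [hceq t ht]
    rw [h2]
    exact h1.hasDerivWithinAt
  have hmemf : ∀ t ∈ Set.Ico (0:ℝ) 1, f t ∈ Metric.closedBall (0 : Pt (2*n)) R := fun t ht =>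
    hR (Set.mem_union_left _ (Set.mem_image_of_mem f (Set.Ico_subset_Icc_self ht)))
  have hmemy : ∀ t ∈ Set.Ico (0:ℝ) 1, y t ∈ Metric.closedBall (0 : Pt (2*n)) R := fun t ht =>
    hR (Set.mem_union_right _ (Set.mem_image_of_mem y (Set.Ico_subset_Icc_self ht)))
  have h00 : f 0 = y 0 := hY0 (y 0)
  exact ODE_solution_unique_of_mem_Icc_right (fun t _ => hvLip t)
    (hfc.continuousOn) hfderiv hmemf (hyc.continuousOn) hyderiv hmemy h00

/-- abstract contraction identity -/
theorem contraction_identity {N : ℕ} (ω P : Matrix (Fin N) (Fin N) ℝ)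
    (Γ : Fin N → Fin N → Fin N → ℝ) (D : Fin N → Fin N → ℝ) (l i j : Fin N)
    (hδ : ∀ r c, ∑ b, ω r b * P b c = if r = c then 1 else 0)
    (hsymm : ∀ r a b, Γ r a b = Γ r b a)
    (hcompat : ∀ a b, D a b = (∑ r, Γ r a l * ω r b) + ∑ r, Γ r b l * ω a r) :
    ∑ m, ((∑ r, Γ r l m * (2 * ω j r)) * P m i
      + (2 * ω j m) * (-∑ a, ∑ b, P m a * D a b * P b i)) = -2 * Γ i j l := by
  classical
  have hS2 : ∑ m, (2 * ω j m) * (-∑ a, ∑ b, P m a * D a b * P b i)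
      = -2 * ((∑ r, Γ r j l * (if r = i then 1 else 0))
          + ∑ b, (∑ r, Γ r b l * ω j r) * P b i) := by
    have e1 : ∀ m, (2 * ω j m) * (-∑ a, ∑ b, P m a * D a b * P b i)
        = ∑ a, ∑ b, (ω j m * P m a) * (-2 * D a b * P b i) := by
      intro m
      rw [mul_neg, Finset.mul_sum, ← Finset.sum_neg_distrib]
      refine Finset.sum_congr rfl fun a _ => ?_
      rw [Finset.mul_sum, ← Finset.sum_neg_distrib]
      exact Finset.sum_congr rfl fun b _ => by ring
    simp only [e1]
    rw [Finset.sum_comm]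
    have e2 : ∀ a, ∑ m, ∑ b, (ω j m * P m a) * (-2 * D a b * P b i)
        = (if j = a then 1 else 0) * (∑ b, -2 * D a b * P b i) := by
      intro a
      simp only [← Finset.mul_sum]
      rw [← Finset.sum_mul, hδ j a]
    simp only [e2, ite_mul, one_mul, zero_mul, Finset.sum_ite_eq, Finset.mem_univ, if_true]
    -- now : ∑ b, -2 * D j b * P b i = -2 * (...)
    simp only [hcompat]
    have eA : ∑ b, (∑ r, Γ r j l * ω r b) * P b i = ∑ r, Γ r j l * (if r = i then 1 else 0) := by
      simp only [Finset.sum_mul]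
      rw [Finset.sum_comm]
      refine Finset.sum_congr rfl fun r _ => ?_
      rw [← hδ r i, Finset.mul_sum]
      exact Finset.sum_congr rfl fun b _ => by ring
    calc ∑ b, -2 * ((∑ r, Γ r j l * ω r b) + ∑ r, Γ r b l * ω j r) * P b i
        = -2 * ((∑ b, (∑ r, Γ r j l * ω r b) * P b i)
            + ∑ b, (∑ r, Γ r b l * ω j r) * P b i) := by
          rw [← Finset.sum_add_distrib, Finset.mul_sum]
          exact Finset.sum_congr rfl fun b _ => by ring
      _ = _ := by rw [eA]
  have hS1 : ∀ m, (∑ r, Γ r l m * (2 * ω j r)) * P m i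
      = 2 * ((∑ r, Γ r m l * ω j r) * P m i) := by
    intro m
    calc (∑ r, Γ r l m * (2 * ω j r)) * P m i
        = ∑ r, 2 * (Γ r m l * ω j r * P m i) := by
          rw [Finset.sum_mul]
          exact Finset.sum_congr rfl fun r _ => by rw [hsymm r l m]; ring
      _ = 2 * ((∑ r, Γ r m l * ω j r) * P m i) := by
          rw [← Finset.mul_sum, ← Finset.sum_mul]
  rw [Finset.sum_add_distrib, hS2]
  simp only [hS1]
  rw [← Finset.mul_sum]
  have hU : ∑ r, Γ r j l * (if r = i then 1 else 0) = Γ i j l := by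
    simp only [mul_ite, mul_one, mul_zero]
    rw [Finset.sum_ite_eq' Finset.univ i (fun r => Γ r j l)]
    simp
  rw [hU]
  ring

/-- the key pointwise algebraic identity -/
theorem alg_identity (x : Pt (2*n)) (l i j : Fin (2*n)) :
    ∑ m, ((∑ r, C.Γ x r l m * (2 * S.ω x j r)) * Psi S.ω x m i
      + (2 * S.ω x j m)
        * (-∑ a, ∑ b, Psi S.ω x m a * pd l (fun z => S.ω z a b) x * Psi S.ω x b i))
      = -2 * C.Γ x i j l := by
  apply contraction_identity (S.ω x) (Psi S.ω x) (C.Γ x)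
    (fun a b => pd l (fun z => S.ω z a b) x) l i j
  · intro r c
    rw [← Matrix.mul_apply, Psi, Matrix.mul_nonsing_inv _ (S.invertible x), Matrix.one_apply]
  · intro r a b
    exact C.symm x r a b
  · intro a b
    have := C.compat x a b l
    show pd l (fun z => S.ω z a b) x
      = (∑ r, C.Γ x r a l * S.ω x r b) + ∑ r, C.Γ x r b l * S.ω x a r
    linarith

theorem Gv_pd_diag (y : ℝ → Pt (2*n)) (t : ℝ) (l i : Fin (2*n)) :
    pd l (fun z => Gv S C E y t z i) (y t)
      = -∑ j, deriv (fun τ => y τ j) t * C.Γ (y t) i l j := by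
  classical
  set x := y t with hx
  have hA : ∀ (j m : Fin (2*n)), ContDiff ℝ (⊤ : ℕ∞) fun z => pd m (fun w => E.H x w j) z :=
    fun j m => (hpdH S C E m j).comp (contDiff_const.prodMk contDiff_id)
  have dA : ∀ j m (z : Pt (2*n)), DifferentiableAt ℝ (fun z => pd m (fun w => E.H x w j) z) z :=
    fun j m z => ((hA j m).differentiable (by simp)).differentiableAt
  have dP : ∀ m i (z : Pt (2*n)), DifferentiableAt ℝ (fun z => Psi S.ω z m i) z :=
    fun m i z => ((contDiff_Psi S.smooth S.invertible m i).differentiable (by simp)).differentiableAt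
  have dprod : ∀ j m (z : Pt (2*n)), DifferentiableAt ℝ
      (fun z => deriv (fun τ => y τ j) t * pd m (fun w => E.H x w j) z * Psi S.ω z m i) z :=
    fun j m z => (((dA j m z).const_mul _).mul (dP m i z))
  have dsum : ∀ j (z : Pt (2*n)), DifferentiableAt ℝ
      (fun z => ∑ m, deriv (fun τ => y τ j) t * pd m (fun w => E.H x w j) z * Psi S.ω z m i) z :=
    fun j z => DifferentiableAt.fun_sum fun m _ => dprod j m z
  -- expand the partial derivative
  have step1 : pd l (fun z => Gv S C E y t z i) x
      = (1/2) * ∑ j, ∑ m, pd l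
          (fun z => deriv (fun τ => y τ j) t * pd m (fun w => E.H x w j) z * Psi S.ω z m i) x := by
    show pd l (fun z => (1/2) * ∑ j, ∑ m, deriv (fun τ => y τ j) t
        * pd m (fun w => E.H x w j) z * Psi S.ω z m i) x = _
    rw [pd_const_mul l _ (DifferentiableAt.fun_sum fun j _ => dsum j x)]
    congr 1
    rw [pd_sum Finset.univ l (fun j _ => dsum j x)]
    exact Finset.sum_congr rfl fun j _ => pd_sum Finset.univ l (fun m _ => dprod j m x)
  have step2 : ∀ (j m : Fin (2*n)), pd l
      (fun z => deriv (fun τ => y τ j) t * pd m (fun w => E.H x w j) z * Psi S.ω z m i) x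
      = deriv (fun τ => y τ j) t
        * ((∑ r, C.Γ x r l m * (2 * S.ω x j r)) * Psi S.ω x m i
          + (2 * S.ω x j m)
            * (-∑ a, ∑ b, Psi S.ω x m a * pd l (fun z => S.ω z a b) x * Psi S.ω x b i)) := by
    intro j m
    have e1 : (fun z => deriv (fun τ => y τ j) t * pd m (fun w => E.H x w j) z * Psi S.ω z m i)
        = fun z => (deriv (fun τ => y τ j) t * pd m (fun w => E.H x w j) z) * Psi S.ω z m i :=
      rfl
    rw [e1, pd_mul l ((dA j m x).const_mul _) (dP m i x),
      pd_const_mul l _ (dA j m x)]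
    have hbc2 : pd l (fun z => pd m (fun w => E.H x w j) z) x
        = ∑ r, C.Γ x r l m * pd r (fun w => E.H x w j) x := E.bc2 x j l m
    have hbc1 : ∀ r, pd r (fun w => E.H x w j) x = 2 * S.ω x j r := fun r => E.bc1 x j r
    rw [hbc2, pd_Psi S.smooth S.invertible l m i x]
    simp only [hbc1]
    ring
  rw [step1]
  simp only [step2]
  have step3 : ∀ j, ∑ m, deriv (fun τ => y τ j) t
      * ((∑ r, C.Γ x r l m * (2 * S.ω x j r)) * Psi S.ω x m i
        + (2 * S.ω x j m)
          * (-∑ a, ∑ b, Psi S.ω x m a * pd l (fun z => S.ω z a b) x * Psi S.ω x b i))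
      = deriv (fun τ => y τ j) t * (-2 * C.Γ x i j l) := by
    intro j
    rw [← Finset.mul_sum, alg_identity S C x l i j]
  simp only [step3]
  rw [Finset.mul_sum]
  rw [← Finset.sum_neg_distrib]
  refine Finset.sum_congr rfl fun j _ => ?_
  rw [C.symm x i j l]
  ring

theorem schwarz {N : ℕ} {f : ℝ × Pt N → ℝ} (hf : ContDiff ℝ (⊤ : ℕ∞) f) (y0 : Pt N) (k : Fin N)
    (t : ℝ) :
    HasDerivAt (fun τ => pd k (fun p => f (τ, p)) y0)
      (pd k (fun p => fderiv ℝ f (t, p) (1, 0)) y0) t := by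
  have hdf : Differentiable ℝ f := hf.differentiable (by simp)
  have hFDs : ContDiff ℝ (⊤ : ℕ∞) (fderiv ℝ f) := hf.fderiv_right (le_refl _)
  have hFDd : DifferentiableAt ℝ (fderiv ℝ f) (t, y0) :=
    (hFDs.differentiable (by simp)).differentiableAt
  have heq : (fun τ => pd k (fun p => f (τ, p)) y0)
      = fun τ => fderiv ℝ f (τ, y0) (0, Pi.single k 1) := by
    funext τ
    exact pd_snd k (hdf _)
  rw [heq]
  have h1 : HasDerivAt (fun τ : ℝ => ((τ, y0) : ℝ × Pt N)) (1, 0) t :=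
    (hasDerivAt_id t).prodMk (hasDerivAt_const t y0)
  have h3 : HasDerivAt (fun τ => fderiv ℝ f (τ, y0)) (fderiv ℝ (fderiv ℝ f) (t, y0) (1, 0)) t :=
    hFDd.hasFDerivAt.comp_hasDerivAt t h1
  have h4 : HasDerivAt (fun τ => fderiv ℝ f (τ, y0) (0, Pi.single k 1))
      ((fderiv ℝ (fderiv ℝ f) (t, y0) (1, 0)) (0, Pi.single k 1)) t := by
    have := h3.clm_apply (hasDerivAt_const t ((0, Pi.single k 1) : ℝ × Pt N))
    simpa using this
  convert h4 using 1
  -- identify pd with the second mixed derivative, using symmetry of the second derivative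
  have hsym : IsSymmSndFDerivAt ℝ f (t, y0) :=
    (hf.contDiffAt).isSymmSndFDerivAt (by rw [minSmoothness_of_isRCLikeNormedField]; exact WithTop.coe_le_coe.mpr le_top)
  have hgd : DifferentiableAt ℝ (fun q : ℝ × Pt N => fderiv ℝ f q ((1:ℝ), (0:Pt N))) (t, y0) :=
    hFDd.clm_apply (differentiableAt_const _)
  have h5 : pd k (fun p => fderiv ℝ f (t, p) (1, 0)) y0
      = fderiv ℝ (fun q : ℝ × Pt N => fderiv ℝ f q ((1:ℝ), (0:Pt N))) (t, y0)
          (0, Pi.single k 1) :=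
    pd_snd k hgd
  have h6 : fderiv ℝ (fun q : ℝ × Pt N => fderiv ℝ f q ((1:ℝ), (0:Pt N))) (t, y0)
      (0, Pi.single k 1) = fderiv ℝ (fderiv ℝ f) (t, y0) (0, Pi.single k 1) (1, 0) := by
    rw [fderiv_clm_apply hFDd (differentiableAt_const _)]
    simp
  rw [h5, h6, hsym]
end Main

set_option maxHeartbeats 1000000 in
/-- Theorem 3.1 (second identity): the linearization of the path-transformation `Y^t`
at the origin `y(0)` of the path is the `Γ`-parallel transport along the path: the
Jacobian `V(t) = ∂Y^t(p)/∂p |_{p=y(0)}` satisfies `V(0) = I` and the parallel transport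
equation `dV/dt = −ẏ(t)Γ(y(t))V`. -/
theorem path_transformation_linearization_is_parallel_transport
    (n : ℕ) (S : SymplForm (2*n)) (C : SymplConn (2*n) S) (E : EtherStructure (2*n) S C)
    (y : ℝ → Pt (2*n)) (hy : ContDiff ℝ (⊤ : ℕ∞) y)
    (Y : ℝ → Pt (2*n) → Pt (2*n))
    (hYsmooth : ∀ i, ContDiff ℝ (⊤ : ℕ∞) fun q : ℝ × Pt (2*n) => Y q.1 q.2 i)
    (hY0 : ∀ p, Y 0 p = p)
    (hYode : ∀ t ∈ Set.Icc (0:ℝ) 1, ∀ p i,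
      HasDerivAt (fun τ => Y τ p i)
        ((1/2) * ∑ j, ∑ m, deriv (fun τ => y τ j) t
          * pd m (fun w => E.H (y t) w j) (Y t p) * Psi S.ω (Y t p) m i) t) :
    (∀ i k, pd k (fun p => Y 0 p i) (y 0) = (if i = k then (1:ℝ) else 0)) ∧
    (∀ t ∈ Set.Icc (0:ℝ) 1, ∀ i k,
      HasDerivAt (fun τ => pd k (fun p => Y τ p i) (y 0))
        (-∑ j, ∑ m, deriv (fun τ => y τ j) t * C.Γ (y t) i m j
          * pd k (fun p => Y t p m) (y 0)) t) := by
  classical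
  constructor
  · intro i k
    have h0 : (fun p : Pt (2*n) => Y 0 p i) = fun p => p i := funext fun p => by rw [hY0]
    rw [h0, pd_coord]
  · intro t ht i k
    have htraj := traj S C E y hy Y hYsmooth hY0 hYode t ht
    have hs := schwarz (f := fun q : ℝ × Pt (2*n) => Y q.1 q.2 i) (hYsmooth i) (y 0) k t
    have hfun : (fun p => fderiv ℝ (fun q : ℝ × Pt (2*n) => Y q.1 q.2 i) (t, p) (1, 0))
        = fun p => Gv S C E y t (Y t p) i := by
      funext p
      exact (deriv_fst ((hYsmooth i).differentiable (by simp)).differentiableAt).unique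
        (hYode t ht p i)
    rw [hfun] at hs
    have hGd : DifferentiableAt ℝ (fun p : Pt (2*n) => Y t p) (y 0) :=
      differentiableAt_pi.mpr fun l =>
        (((hYsmooth l).differentiable (by simp)).comp
          ((differentiable_const t).prodMk differentiable_id)).differentiableAt
    have hfd : ∀ w : Pt (2*n), DifferentiableAt ℝ (fun z => Gv S C E y t z i) w := by
      intro w
      show DifferentiableAt ℝ (fun z => (1/2) * ∑ j, ∑ m, deriv (fun τ => y τ j) t
        * pd m (fun v => E.H (y t) v j) z * Psi S.ω z m i) w
      have dA : ∀ (j m : Fin (2*n)),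
          DifferentiableAt ℝ (fun z => pd m (fun v => E.H (y t) v j) z) w := fun j m =>
        ((((hpdH S C E m j).comp (contDiff_const.prodMk contDiff_id)).differentiable
          (by simp)).differentiableAt)
      have dP : ∀ m, DifferentiableAt ℝ (fun z => Psi S.ω z m i) w := fun m =>
        ((contDiff_Psi S.smooth S.invertible m i).differentiable (by simp)).differentiableAt
      exact (DifferentiableAt.fun_sum fun j _ => DifferentiableAt.fun_sum fun m _ =>
        ((dA j m).const_mul _).mul (dP m)).const_mul _
    have hcomp : pd k (fun p => Gv S C E y t (Y t p) i) (y 0)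
        = ∑ l, pd l (fun z => Gv S C E y t z i) (Y t (y 0)) * pd k (fun p => Y t p l) (y 0) :=
      pd_comp k (hfd (Y t (y 0))) hGd
    have hvals : pd k (fun p => Gv S C E y t (Y t p) i) (y 0)
        = -∑ j, ∑ m, deriv (fun τ => y τ j) t * C.Γ (y t) i m j
            * pd k (fun p => Y t p m) (y 0) := by
      rw [hcomp]
      simp only [htraj, Gv_pd_diag S C E y t]
      have e1 : ∀ l, (-∑ j, deriv (fun τ => y τ j) t * C.Γ (y t) i l j)
          * pd k (fun p => Y t p l) (y 0)
          = ∑ j, -(deriv (fun τ => y τ j) t * C.Γ (y t) i l j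
              * pd k (fun p => Y t p l) (y 0)) := by
        intro l
        rw [neg_mul, Finset.sum_mul, ← Finset.sum_neg_distrib]
      simp only [e1]
      rw [Finset.sum_comm]
      simp only [Finset.sum_neg_distrib]
    rw [hvals] at hs
    exact hs
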